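/- arXiv:0705.2024 — 5 statements merged into one kernel-verified Lean document; each statement's English description precedes it below -/
import Mathlib

section
/- Let B be an operator on a finite-dimensional Hilbert space with operator norm ‖B‖ ≤ 1, and let P, Q be orthogonal projections. If ‖BQ − P‖ ≤ ε for some ε ∈ [0,1], then ‖B†BQ − P‖ ≤ √(1−(1−ε)²) + 3ε + ε². -/
/-!
Writing `P` as idempotent, `B†BQ - P = B†(BQ - P) + (1 - Q)B†P + (QB† - P)P`. The outer terms
have norm at most `ε`, since `QB† - P = (BQ - P)†`. For the middle one, `y = Px` satisfies
`‖QB†y‖ ≥ (1 - ε)‖y‖` while `‖B†y‖ ≤ ‖y‖`, so Pythagoras for `Q` leaves at most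
`√(1 - (1 - ε)²)‖y‖` for the component `(1 - Q)B†y`.
-/

open ContinuousLinearMap

lemma mul_mul_sub_eq_of_isIdempotentElem {R : Type*} [Ring R] {p : R}
    (hp : IsIdempotentElem p) (a b q : R) :
    a * (b * q) - p = a * (b * q - p) + (1 - q) * a * p + (q * a - p) * p := by
  rw [sub_mul (q * a), hp.eq]; noncomm_ring

section

variable {𝕜 E : Type*} [RCLike 𝕜] [NormedAddCommGroup E] [InnerProductSpace 𝕜 E]
  [CompleteSpace E]

lemma IsStarProjection.norm_sq_apply_add_norm_sq_sub_apply {p : E →L[𝕜] E}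
    (hp : IsStarProjection p) (x : E) : ‖p x‖ ^ 2 + ‖x - p x‖ ^ 2 = ‖x‖ ^ 2 := by
  obtain ⟨K, _, rfl⟩ := isStarProjection_iff_eq_starProjection.mp hp
  rw [K.norm_sq_eq_add_norm_sq_starProjection x, K.starProjection_orthogonal', sub_apply,
    one_apply_eq_self]

lemma IsStarProjection.norm_sub_apply_le_sqrt {q : E →L[𝕜] E} (hq : IsStarProjection q)
    {y z : E} {ε : ℝ} (hε0 : 0 ≤ ε) (hε1 : ε ≤ 1) (hzy : ‖z‖ ≤ ‖y‖)
    (hqz : ‖q z - y‖ ≤ ε * ‖y‖) : ‖z - q z‖ ≤ √(1 - (1 - ε) ^ 2) * ‖y‖ := by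
  have hlow : (1 - ε) * ‖y‖ ≤ ‖q z‖ := by
    linarith [norm_sub_norm_le y (q z), norm_sub_rev y (q z)]
  have hsq : ‖z - q z‖ ^ 2 ≤ (1 - (1 - ε) ^ 2) * ‖y‖ ^ 2 := by
    have := hq.norm_sq_apply_add_norm_sq_sub_apply z
    nlinarith [norm_nonneg z, mul_nonneg (sub_nonneg.2 hε1) (norm_nonneg y)]
  rw [← Real.sqrt_sq (norm_nonneg (z - q z)), ← Real.sqrt_sq (norm_nonneg y),
    ← Real.sqrt_mul (by nlinarith)]
  exact Real.sqrt_le_sqrt hsq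

lemma IsStarProjection.norm_one_sub_mul_mul_le_sqrt {a p q : E →L[𝕜] E}
    (hp : IsStarProjection p) (hq : IsStarProjection q) (ha : ‖a‖ ≤ 1) {ε : ℝ} (hε1 : ε ≤ 1)
    (h : ‖q * a - p‖ ≤ ε) : ‖(1 - q) * a * p‖ ≤ √(1 - (1 - ε) ^ 2) := by
  refine opNorm_le_bound _ (Real.sqrt_nonneg _) fun x ↦ ?_
  have hpx : p (p x) = p x := congr($(hp.isIdempotentElem.eq) x)
  have hzy : ‖a (p x)‖ ≤ ‖p x‖ := a.le_of_opNorm_le ha _ |>.trans_eq (one_mul _)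
  have hqz : ‖q (a (p x)) - p x‖ ≤ ε * ‖p x‖ := by
    simpa [hpx] using (q * a - p).le_of_opNorm_le h (p x)
  have hpx_le : ‖p x‖ ≤ ‖x‖ := p.le_of_opNorm_le (hp.norm_le p) x |>.trans_eq (one_mul _)
  calc ‖((1 - q) * a * p) x‖ = ‖a (p x) - q (a (p x))‖ := by simp
    _ ≤ √(1 - (1 - ε) ^ 2) * ‖p x‖ :=
      hq.norm_sub_apply_le_sqrt ((norm_nonneg _).trans h) hε1 hzy hqz
    _ ≤ √(1 - (1 - ε) ^ 2) * ‖x‖ := by gcongr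

end

theorem stmt_0_general {E : Type*} [NormedAddCommGroup E] [InnerProductSpace ℂ E]
    [FiniteDimensional ℂ E]
    (B P Q : E →L[ℂ] E) (ε : ℝ) (hε1 : ε ≤ 1)
    (hB : ‖B‖ ≤ 1)
    (hPproj : P ∘L P = P) (hPsa : adjoint P = P)
    (hQproj : Q ∘L Q = Q) (hQsa : adjoint Q = Q)
    (h : ‖B ∘L Q - P‖ ≤ ε) :
    ‖adjoint B ∘L B ∘L Q - P‖ ≤ Real.sqrt (1 - (1 - ε) ^ 2) + 3 * ε + ε ^ 2 := by
  have hP : IsStarProjection P := ⟨hPproj, hPsa⟩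
  have hQ : IsStarProjection Q := ⟨hQproj, hQsa⟩
  have hε0 : 0 ≤ ε := (norm_nonneg _).trans h
  have hB' : ‖star B‖ ≤ 1 := by rwa [star_eq_adjoint, adjoint.norm_map]
  have h' : ‖Q * star B - P‖ ≤ ε := by
    rwa [← hP.isSelfAdjoint.star_eq, ← hQ.isSelfAdjoint.star_eq, ← star_mul, ← star_sub,
      norm_star]
  have hmid := hP.norm_one_sub_mul_mul_le_sqrt hQ hB' hε1 h'
  change ‖star B * (B * Q) - P‖ ≤ _
  rw [mul_mul_sub_eq_of_isIdempotentElem hP.isIdempotentElem]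
  calc _ ≤ ‖star B‖ * ‖B * Q - P‖ + ‖(1 - Q) * star B * P‖ + ‖Q * star B - P‖ * ‖P‖ := by
        refine (norm_add_le_of_le (norm_add_le_of_le ?_ le_rfl) ?_) <;> exact norm_mul_le _ _
    _ ≤ 1 * ε + √(1 - (1 - ε) ^ 2) + ε * 1 := by
        gcongr
        exacts [h, hP.norm_le P]
    _ ≤ _ := by nlinarith

theorem stmt_0 {E : Type*} [NormedAddCommGroup E] [InnerProductSpace ℂ E]
    [FiniteDimensional ℂ E]
    (B P Q : E →L[ℂ] E) (ε : ℝ) (hε0 : 0 ≤ ε) (hε1 : ε ≤ 1)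
    (hB : ‖B‖ ≤ 1)
    (hPproj : P ∘L P = P) (hPsa : adjoint P = P)
    (hQproj : Q ∘L Q = Q) (hQsa : adjoint Q = Q)
    (h : ‖B ∘L Q - P‖ ≤ ε) :
    ‖adjoint B ∘L B ∘L Q - P‖ ≤ Real.sqrt (1 - (1 - ε) ^ 2) + 3 * ε + ε ^ 2 :=
  stmt_0_general B P Q ε hε1 hB hPproj hPsa hQproj hQsa h
end

section
/- Let B be an operator with ‖B‖ ≤ 1 and P, Q orthogonal projections with ‖BQ − P‖ ≤ ε ≤ 1. Then ‖(1−Q)B†BQ‖ ≤ √(1−(1−ε)²) + ε. -/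
/-!
Since `B Q = (B Q - P)(1 - P) + B Q P`, the operator splits into `(1 - Q) B† (B Q - P) (1 - P)`,
of norm at most `ε`, and `(1 - Q) B† B Q P`. For `w = Q P x`, which is orthogonal to the range of
`1 - Q`, Cauchy–Schwarz for the positive semidefinite form `⟪u, w⟫ - ⟪B u, B w⟫` bounds
`‖(1 - Q) B† B w‖²` by `‖w‖² - ‖B w‖²`; and `‖B w‖ ≥ (1 - ε) ‖P x‖` because `B Q` is `ε`-close to
`P` on the range of `P`, so this is at most `(1 - (1 - ε)²) ‖x‖²`.
-/

open ContinuousLinearMap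
open scoped InnerProductSpace

theorem IsIdempotentElem.eq_sub_mul_one_sub_add_mul {R : Type*} [Ring R] {p : R}
    (hp : IsIdempotentElem p) (x : R) : x = (x - p) * (1 - p) + x * p := by
  rw [sub_mul, mul_one_sub, mul_one_sub, hp.eq]
  abel

section Contraction

variable {𝕜 E F : Type*} [RCLike 𝕜] [NormedAddCommGroup E] [InnerProductSpace 𝕜 E]
  [NormedAddCommGroup F] [InnerProductSpace 𝕜 F]

theorem norm_inner_map_map_sq_le_of_inner_eq_zero {B : E →L[𝕜] F} (hB : ‖B‖ ≤ 1) {u w : E}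
    (huw : ⟪u, w⟫_𝕜 = 0) :
    ‖⟪B u, B w⟫_𝕜‖ ^ 2 ≤ (‖u‖ ^ 2 - ‖B u‖ ^ 2) * (‖w‖ ^ 2 - ‖B w‖ ^ 2) := by
  let defect : PreInnerProductSpace.Core 𝕜 E :=
    { inner := fun a b => ⟪a, b⟫_𝕜 - ⟪B a, B b⟫_𝕜
      conj_inner_symm := fun a b => by simp only [map_sub, inner_conj_symm]
      re_inner_nonneg := fun a => by
        rw [map_sub, inner_self_eq_norm_sq, inner_self_eq_norm_sq, sub_nonneg]
        exact pow_le_pow_left₀ (norm_nonneg _) (by simpa using B.le_of_opNorm_le hB a) 2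
      add_left := fun a b c => by simp only [map_add, inner_add_left]; ring
      smul_left := fun a b r => by simp only [map_smul, inner_smul_left]; ring }
  have hcs := @InnerProductSpace.Core.inner_mul_inner_self_le 𝕜 E _ _ _ defect u w
  change ‖⟪u, w⟫_𝕜 - ⟪B u, B w⟫_𝕜‖ * ‖⟪w, u⟫_𝕜 - ⟪B w, B u⟫_𝕜‖
    ≤ RCLike.re (⟪u, u⟫_𝕜 - ⟪B u, B u⟫_𝕜) * RCLike.re (⟪w, w⟫_𝕜 - ⟪B w, B w⟫_𝕜) at hcs
  rw [← inner_conj_symm w u, ← inner_conj_symm (B w) (B u), huw] at hcs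
  simpa only [map_sub, inner_self_eq_norm_sq, map_zero, zero_sub, norm_neg, RCLike.norm_conj,
    ← sq] using hcs

theorem IsStarProjection.norm_sq_apply_adjoint_apply_le [CompleteSpace E] [CompleteSpace F]
    {B : E →L[𝕜] F} (hB : ‖B‖ ≤ 1) {R : E →L[𝕜] E} (hR : IsStarProjection R) {w : E}
    (hw : R w = 0) :
    ‖R (adjoint B (B w))‖ ^ 2 ≤ ‖w‖ ^ 2 - ‖B w‖ ^ 2 := by
  set z := R (adjoint B (B w))
  have hRz : R z = z := by simpa using congr($(hR.isIdempotentElem.eq) (adjoint B (B w)))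
  have hR_inner (a b : E) : ⟪R a, b⟫_𝕜 = ⟪a, R b⟫_𝕜 := by
    rw [← adjoint_inner_right, hR.isSelfAdjoint.adjoint_eq]
  have hzw : ⟪z, w⟫_𝕜 = 0 := by rw [← hRz, hR_inner, hw, inner_zero_right]
  have hz_norm : (‖z‖ ^ 2 : 𝕜) = ⟪B z, B w⟫_𝕜 :=
    calc (‖z‖ ^ 2 : 𝕜) = ⟪z, R (adjoint B (B w))⟫_𝕜 := (inner_self_eq_norm_sq_to_K z).symm
      _ = ⟪B z, B w⟫_𝕜 := by rw [← hR_inner, hRz, adjoint_inner_right]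
  have hcs := norm_inner_map_map_sq_le_of_inner_eq_zero hB hzw
  rw [← hz_norm, norm_pow, RCLike.norm_ofReal, abs_norm] at hcs
  have hBz : ‖B z‖ ≤ ‖z‖ := by simpa using B.le_of_opNorm_le hB z
  have hBw : ‖B w‖ ≤ ‖w‖ := by simpa using B.le_of_opNorm_le hB w
  nlinarith [pow_le_pow_left₀ (norm_nonneg _) hBz 2, pow_le_pow_left₀ (norm_nonneg _) hBw 2,
    sq_nonneg ‖z‖, sq_nonneg ‖B z‖]

theorem norm_one_sub_mul_adjoint_mul_self_mul_mul_le [CompleteSpace E] {B P Q : E →L[𝕜] E}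
    {ε : ℝ} (hε1 : ε ≤ 1) (hB : ‖B‖ ≤ 1) (hP : IsStarProjection P) (hQ : IsStarProjection Q)
    (h : ‖B * Q - P‖ ≤ ε) :
    ‖(1 - Q) * adjoint B * B * Q * P‖ ≤ √(1 - (1 - ε) ^ 2) := by
  refine opNorm_le_bound _ (Real.sqrt_nonneg _) fun x => ?_
  have hε0 : 0 ≤ ε := (norm_nonneg _).trans h
  set w := Q (P x)
  have hw : (1 - Q) w = 0 := by simpa using congr($(hQ.one_sub_mul_self) (P x))
  have hPPx : P (P x) = P x := by simpa using congr($(hP.isIdempotentElem.eq) x)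
  have hBw : (1 - ε) * ‖P x‖ ≤ ‖B w‖ := by
    have hdist : ‖B w - P x‖ ≤ ε * ‖P x‖ := by
      simpa [hPPx] using (B * Q - P).le_of_opNorm_le h (P x)
    linarith [norm_sub_norm_le (P x) (B w), norm_sub_rev (P x) (B w)]
  have hwPx : ‖w‖ ≤ ‖P x‖ := by simpa using Q.le_of_opNorm_le (hQ.norm_le Q) (P x)
  have hPx : ‖P x‖ ≤ ‖x‖ := by simpa using P.le_of_opNorm_le (hP.norm_le P) x
  have hdefect := hQ.one_sub.norm_sq_apply_adjoint_apply_le hB hw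
  have hBw_sq := pow_le_pow_left₀ (mul_nonneg (by linarith) (norm_nonneg _)) hBw 2
  rw [mul_pow] at hBw_sq
  have hcoef : 0 ≤ 1 - (1 - ε) ^ 2 := by nlinarith
  change ‖(1 - Q) (adjoint B (B w))‖ ≤ _
  rw [← Real.sqrt_sq (norm_nonneg x), ← Real.sqrt_mul' _ (sq_nonneg _)]
  refine (abs_norm _).symm.le.trans (Real.abs_le_sqrt ?_)
  nlinarith [pow_le_pow_left₀ (norm_nonneg _) hwPx 2,
    mul_le_mul_of_nonneg_left (pow_le_pow_left₀ (norm_nonneg _) hPx 2) hcoef]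

end Contraction

theorem stmt_2 {E : Type*} [NormedAddCommGroup E] [InnerProductSpace ℂ E]
    [FiniteDimensional ℂ E]
    (B P Q : E →L[ℂ] E) (ε : ℝ) (hε1 : ε ≤ 1)
    (hB : ‖B‖ ≤ 1)
    (hPproj : P ∘L P = P) (hPsa : adjoint P = P)
    (hQproj : Q ∘L Q = Q) (hQsa : adjoint Q = Q)
    (h : ‖B ∘L Q - P‖ ≤ ε) :
    ‖(1 - Q) ∘L adjoint B ∘L B ∘L Q‖ ≤ Real.sqrt (1 - (1 - ε) ^ 2) + ε := by
  have hP : IsStarProjection P := ⟨hPproj, hPsa⟩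
  have hQ : IsStarProjection Q := ⟨hQproj, hQsa⟩
  replace h : ‖B * Q - P‖ ≤ ε := h
  have hB' : ‖adjoint B‖ ≤ 1 := by rwa [LinearIsometryEquiv.norm_map]
  have hfirst : ‖(1 - Q) * adjoint B * (B * Q - P) * (1 - P)‖ ≤ ε := by
    simpa using norm_mul_le_of_le (norm_mul_le_of_le (norm_mul_le_of_le
      (hQ.one_sub.norm_le _) hB') h) (hP.one_sub.norm_le _)
  have hsecond := norm_one_sub_mul_adjoint_mul_self_mul_mul_le hε1 hB hP hQ h
  calc ‖(1 - Q) ∘L adjoint B ∘L B ∘L Q‖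
      = ‖(1 - Q) * adjoint B * (B * Q - P) * (1 - P) + (1 - Q) * adjoint B * B * Q * P‖ := by
        change ‖(1 - Q) * (adjoint B * (B * Q))‖ = _
        conv_lhs => rw [hP.isIdempotentElem.eq_sub_mul_one_sub_add_mul (B * Q)]
        noncomm_ring
    _ ≤ _ := norm_add_le _ _
    _ ≤ ε + √(1 - (1 - ε) ^ 2) := add_le_add hfirst hsecond
    _ = _ := add_comm _ _
end

section
/- There exist a 2×2 matrix B with ‖B‖ ≤ 1 and orthogonal projections P = Q = diag(1,0) such that ‖BQ − P‖ = ε but ‖B†BQ − P‖ ≥ √(1−(1−ε)²)·(1−ε), showing the O(√ε) error dependence is essentially optimal. Specifically, for B = [[1−ε, √(1−(1−ε)²)],[0,0]], one has ‖BQ − P‖ = ε and ‖B†BQ − P‖ ≥ (1−ε)√(1−(1−ε)²). -/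
/-!
All three norms are computed exactly from the C⋆-identity `‖A‖² = ‖Aᴴ A‖` and the
fact that a diagonal matrix has the sup norm of its diagonal as operator norm. With
`c = 1 - ε`, `s = √(1 - c²)` and `M = Bᴴ B Q - P` one finds `B Bᴴ = diag(1, 0)`,
`B Q - P = diag(-ε, 0)` and `Mᴴ M = diag(s², 0)`, so `‖B‖ = 1`, `‖B Q - P‖ = ε` and
`‖M‖ = s ≥ c s`.
-/

open Matrix

section

variable {𝕜 n : Type*} [RCLike 𝕜] [Fintype n] [DecidableEq n]

open scoped Matrix.Norms.L2Operator

theorem norm_toEuclideanCLM_diagonal (v : n → 𝕜) :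
    ‖toEuclideanCLM (𝕜 := 𝕜) (diagonal v)‖ = ‖v‖ :=
  l2_opNorm_diagonal v

theorem norm_toEuclideanCLM_sq_of_conjTranspose_mul_self_eq_diagonal {A : Matrix n n 𝕜}
    {v : n → 𝕜} (h : Aᴴ * A = diagonal v) : ‖toEuclideanCLM (𝕜 := 𝕜) A‖ ^ 2 = ‖v‖ := by
  rw [l2_opNorm_toEuclideanCLM, sq, ← l2_opNorm_conjTranspose_mul_self, h, l2_opNorm_diagonal]

theorem norm_toEuclideanCLM_sq_of_mul_conjTranspose_self_eq_diagonal {A : Matrix n n 𝕜}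
    {v : n → 𝕜} (h : A * Aᴴ = diagonal v) : ‖toEuclideanCLM (𝕜 := 𝕜) A‖ ^ 2 = ‖v‖ := by
  rw [l2_opNorm_toEuclideanCLM, ← l2_opNorm_conjTranspose, ← l2_opNorm_toEuclideanCLM]
  exact norm_toEuclideanCLM_sq_of_conjTranspose_mul_self_eq_diagonal
    (by rwa [conjTranspose_conjTranspose])

end

theorem stmt_4 (ε : ℝ) (h0 : 0 < ε) (h1 : ε < 1) :
    ∃ B P Q : Matrix (Fin 2) (Fin 2) ℂ,
      B = !![((1 - ε : ℝ) : ℂ), ((Real.sqrt (1 - (1 - ε) ^ 2) : ℝ) : ℂ); 0, 0] ∧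
      P = !![1, 0; 0, 0] ∧ Q = P ∧
      ‖Matrix.toEuclideanCLM (𝕜 := ℂ) B‖ ≤ 1 ∧
      ‖Matrix.toEuclideanCLM (𝕜 := ℂ) (B * Q - P)‖ = ε ∧
      (1 - ε) * Real.sqrt (1 - (1 - ε) ^ 2) ≤
        ‖Matrix.toEuclideanCLM (𝕜 := ℂ) (Bᴴ * B * Q - P)‖ := by
  set c : ℝ := 1 - ε
  set s : ℝ := Real.sqrt (1 - c ^ 2)
  have hs : 0 ≤ s := Real.sqrt_nonneg _
  have hcs : (c : ℂ) ^ 2 + (s : ℂ) ^ 2 = 1 := by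
    have : c ^ 2 + s ^ 2 = 1 := by
      rw [Real.sq_sqrt (by nlinarith)]
      ring
    exact_mod_cast this
  set B : Matrix (Fin 2) (Fin 2) ℂ := !![(c : ℂ), (s : ℂ); 0, 0]
  set P : Matrix (Fin 2) (Fin 2) ℂ := !![1, 0; 0, 0]
  have hB : B * Bᴴ = diagonal (Pi.single 0 1) := by
    ext i j; fin_cases i <;> fin_cases j <;> simp [B, mul_apply, ← hcs, sq]
  have hBP : B * P - P = diagonal (Pi.single 0 (-ε : ℂ)) := by
    ext i j; fin_cases i <;> fin_cases j <;> simp [B, P, c]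
  have hM : (Bᴴ * B * P - P)ᴴ * (Bᴴ * B * P - P) = diagonal (Pi.single 0 ((s : ℂ) ^ 2)) := by
    ext i j; fin_cases i <;> fin_cases j <;> simp [B, P, mul_apply]
    linear_combination ((c : ℂ) ^ 2 - 1) * hcs
  refine ⟨B, P, P, rfl, rfl, rfl, ?_, ?_, ?_⟩
  · rw [← sq_le_one_iff₀ (norm_nonneg _),
      norm_toEuclideanCLM_sq_of_mul_conjTranspose_self_eq_diagonal hB, Pi.norm_single, norm_one]
  · rw [hBP, norm_toEuclideanCLM_diagonal, Pi.norm_single, norm_neg, Complex.norm_real,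
      Real.norm_of_nonneg h0.le]
  · have hMs := norm_toEuclideanCLM_sq_of_conjTranspose_mul_self_eq_diagonal hM
    rw [Pi.norm_single, ← Complex.ofReal_pow, Complex.norm_real,
      Real.norm_of_nonneg (sq_nonneg _), sq_eq_sq₀ (norm_nonneg _) hs] at hMs
    rw [hMs]
    exact mul_le_of_le_one_left hs (by linarith)
end

section
/- Let (p_α)_{α≥1} be a probability distribution (nonnegative, summing to 1) indexed by positive integers. Suppose there exist constants k ≥ 1, D ≥ 2, ξ > 0, and an integer m' ≥ 0 such that for all integers m > m', ∑_{α > k·D^{2m}} p_α ≤ exp(−2(m−m')/ξ). Then the Shannon entropy H = −∑_α p_α log p_α satisfies H ≤ log k + (2m'+2)·log D + ξ·log D + 4·log D + 1 + log(D²−1) + log(ξ/2 + 1). -/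
/-!
Let `c α` be the number of thresholds `N n = k D^(2(m'+n+1))` below `α`, so that the block
`{α | c α = n}` lies in `[0, N n)`. Putting mass `(1 - t) t^n / N n`, `t = e^(-2/ξ)`, on each point
of block `n` gives a subprobability `q`, and Gibbs' inequality bounds the entropy of `p` by the
cross entropy `∑ p (-log q)`, which is affine in the mean of `c` under `p`. By the tail hypothesis
that mean is at most `∑_{n ≥ 1} t^n = t / (1 - t) ≤ ξ / 2`.
-/

open Real

lemma Real.negMulLog_le_mul_neg_log_add_sub {x y : ℝ} (hx : 0 ≤ x) (hy : 0 < y) :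
    negMulLog x ≤ x * -log y + (y - x) := by
  have h := negMulLog_le_one_sub_self (div_nonneg hx hy.le)
  have hxy : x = x / y * y := (div_mul_cancel₀ x hy.ne').symm
  calc negMulLog x = y * negMulLog (x / y) + x / y * negMulLog y := by
        rw [hxy, negMulLog_mul, div_mul_cancel₀ x hy.ne']
    _ ≤ y * (1 - x / y) + x / y * negMulLog y := by gcongr
    _ = x * -log y + (y - x) := by
        rw [negMulLog]; field_simp; ring

lemma tsum_negMulLog_le_tsum_mul_neg_log {ι : Type*} {p q : ι → ℝ} (hp : ∀ i, 0 ≤ p i)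
    (hps : Summable p) (hp1 : ∑' i, p i = 1) (hq : ∀ i, 0 < q i) (hqs : Summable q)
    (hq1 : ∑' i, q i ≤ 1) (hpq : Summable fun i => p i * -log (q i)) :
    ∑' i, negMulLog (p i) ≤ ∑' i, p i * -log (q i) := by
  by_cases hH : Summable fun i => negMulLog (p i)
  · calc ∑' i, negMulLog (p i) ≤ ∑' i, (p i * -log (q i) + (q i - p i)) :=
          hH.tsum_le_tsum (fun i => negMulLog_le_mul_neg_log_add_sub (hp i) (hq i))
            (hpq.add (hqs.sub hps))
      _ = ∑' i, p i * -log (q i) + (∑' i, q i - 1) := by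
          rw [hpq.tsum_add (hqs.sub hps), hqs.tsum_sub hps, hp1]
      _ ≤ ∑' i, p i * -log (q i) := by linarith
  · have hq_le_one : ∀ i, q i ≤ 1 := fun i => (hqs.le_tsum i fun j _ => (hq j).le).trans hq1
    rw [tsum_eq_zero_of_not_summable hH]
    exact tsum_nonneg fun i =>
      mul_nonneg (hp i) (neg_nonneg.2 (log_nonpos (hq i).le (hq_le_one i)))

lemma one_sub_exp_neg_inv_le {x : ℝ} (hx : 0 < x) : (1 - exp (-x))⁻¹ ≤ x⁻¹ + 1 := by
  have h1 : exp (-x) < 1 := exp_lt_one_iff.2 (neg_lt_zero.2 hx)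
  have h2 : (x + 1) * exp (-x) ≤ 1 := by
    calc (x + 1) * exp (-x) ≤ exp x * exp (-x) := by gcongr; exact add_one_le_exp x
      _ = 1 := by rw [← exp_add, add_neg_cancel, exp_zero]
  rw [inv_le_iff_one_le_mul₀ (by linarith)]
  field_simp
  nlinarith

lemma Nat.lt_log_div_sub_iff {k b m α : ℕ} (hk : 0 < k) (hb : 1 < b) (n : ℕ) :
    n < Nat.log b (α / k) - m ↔ k * b ^ (m + n + 1) ≤ α := by
  rw [show n < Nat.log b (α / k) - m ↔ m + n + 1 ≤ Nat.log b (α / k) by omega, mul_comm,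
    ← Nat.le_div_iff_mul_le hk]
  refine ⟨fun h => Nat.pow_le_of_le_log ?_ h, Nat.le_log_of_pow_le hb⟩
  rintro h0
  simp [h0] at h

lemma summable_and_tsum_le_of_tsum_ofReal_le {ι : Type*} {f : ι → ℝ} (hf : ∀ i, 0 ≤ f i)
    {a : ℝ} (ha : 0 ≤ a) (h : ∑' i, ENNReal.ofReal (f i) ≤ ENNReal.ofReal a) :
    Summable f ∧ ∑' i, f i ≤ a := by
  have hs : Summable f :=
    (ENNReal.summable_toReal (ne_top_of_le_ne_top ENNReal.ofReal_ne_top h)).congr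
      fun i => ENNReal.toReal_ofReal (hf i)
  refine ⟨hs, ?_⟩
  rwa [← ENNReal.ofReal_le_ofReal_iff ha, ENNReal.ofReal_tsum_of_nonneg hf hs]

namespace ENNReal

lemma tsum_mul_natCast_eq_tsum_tsum_ite (f : ℕ → ℝ≥0∞) (c : ℕ → ℕ) :
    ∑' α, f α * c α = ∑' n, ∑' α, if n < c α then f α else 0 := by
  have hc : ∀ α, (c α : ℝ≥0∞) = ∑' n, if n < c α then 1 else 0 := fun α => by
    rw [tsum_eq_sum (s := Finset.range (c α)) (by simp)]
    simp [Finset.filter_true_of_mem fun _ h => Finset.mem_range.1 h]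
  simp_rw [hc, ← ENNReal.tsum_mul_left, mul_ite, mul_one, mul_zero]
  exact ENNReal.tsum_comm

lemma tsum_div_natCast_comp_le {N c : ℕ → ℕ} (hN : ∀ n, N n ≠ 0) (hc : ∀ α, α < N (c α))
    (w : ℕ → ℝ≥0∞) : ∑' α, w (c α) / N (c α) ≤ ∑' n, w n := by
  rw [← ENNReal.tsum_fiberwise _ c]
  refine ENNReal.tsum_le_tsum fun n => ?_
  have hfiber : c ⁻¹' {n} ⊆ ↑(Finset.range (N n)) := by
    rintro α rfl
    simpa using hc α
  calc ∑' α : c ⁻¹' {n}, w (c α) / N (c α) = ∑' α : c ⁻¹' {n}, w n / N n :=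
        tsum_congr fun α => by rw [α.2]
    _ ≤ ∑' _ : (Finset.range (N n) : Set ℕ), w n / N n :=
        ENNReal.tsum_mono_subtype (fun _ => w n / N n) hfiber
    _ = w n := by
        rw [Finset.tsum_subtype' _ (fun _ => w n / N n), Finset.sum_const, Finset.card_range,
          nsmul_eq_mul, ENNReal.mul_div_cancel (by exact_mod_cast hN n) (natCast_ne_top _)]

end ENNReal

section Blocks

variable {N c : ℕ → ℕ} {t : ℝ}

lemma summable_and_tsum_geometric_div_le_one (hN : ∀ n, N n ≠ 0) (hc : ∀ α, α < N (c α))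
    (ht0 : 0 ≤ t) (ht1 : t < 1) :
    Summable (fun α => (1 - t) * t ^ c α / N (c α)) ∧
      ∑' α, (1 - t) * t ^ c α / N (c α) ≤ 1 := by
  have hw : ∀ n, 0 ≤ (1 - t) * t ^ n := fun n => mul_nonneg (by linarith) (pow_nonneg ht0 n)
  have hN' : ∀ n, (0 : ℝ) < N n := fun n => by exact_mod_cast Nat.pos_of_ne_zero (hN n)
  refine summable_and_tsum_le_of_tsum_ofReal_le (fun α => div_nonneg (hw _) (hN' _).le)
    zero_le_one ?_
  have hgeom : ∑' n, (1 - t) * t ^ n = 1 := by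
    rw [tsum_mul_left, tsum_geometric_of_lt_one ht0 ht1, mul_inv_cancel₀ (by linarith)]
  calc ∑' α, ENNReal.ofReal ((1 - t) * t ^ c α / N (c α))
      = ∑' α, ENNReal.ofReal ((1 - t) * t ^ c α) / N (c α) := by
        simp_rw [ENNReal.ofReal_div_of_pos (hN' _), ENNReal.ofReal_natCast]
    _ ≤ ∑' n, ENNReal.ofReal ((1 - t) * t ^ n) := ENNReal.tsum_div_natCast_comp_le hN hc _
    _ = ENNReal.ofReal 1 := by
        rw [← ENNReal.ofReal_tsum_of_nonneg hw
          ((summable_geometric_of_lt_one ht0 ht1).mul_left _), hgeom]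

lemma summable_and_tsum_mul_natCast_le_of_tail_le {p : ℕ → ℝ} (hp : ∀ α, 0 ≤ p α)
    (hps : Summable p) (hc : ∀ n α, n < c α ↔ N n ≤ α) (ht0 : 0 ≤ t) (ht1 : t < 1)
    (htail : ∀ n, (∑' α, if N n ≤ α then p α else 0) ≤ t ^ (n + 1)) :
    Summable (fun α => p α * c α) ∧ ∑' α, p α * c α ≤ t / (1 - t) := by
  have hgeom : HasSum (fun n => t ^ (n + 1)) (t / (1 - t)) := by
    simpa [pow_succ, div_eq_mul_inv, mul_comm] using
      (hasSum_geometric_of_lt_one ht0 ht1).mul_right t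
  refine summable_and_tsum_le_of_tsum_ofReal_le (fun α => mul_nonneg (hp α) (Nat.cast_nonneg _))
    (div_nonneg ht0 (by linarith)) ?_
  have htail' : ∀ n, ∑' α, (if n < c α then ENNReal.ofReal (p α) else 0) ≤
      ENNReal.ofReal (t ^ (n + 1)) := fun n => by
    have hs : Summable fun α => if N n ≤ α then p α else 0 :=
      (hps.indicator {α | N n ≤ α}).congr fun α => by simp [Set.indicator_apply]
    calc ∑' α, (if n < c α then ENNReal.ofReal (p α) else 0)
        = ∑' α, ENNReal.ofReal (if N n ≤ α then p α else 0) := by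
          simp_rw [hc, apply_ite ENNReal.ofReal, ENNReal.ofReal_zero]
      _ = ENNReal.ofReal (∑' α, if N n ≤ α then p α else 0) :=
          (ENNReal.ofReal_tsum_of_nonneg (fun α => by split_ifs <;> simp [hp]) hs).symm
      _ ≤ ENNReal.ofReal (t ^ (n + 1)) := ENNReal.ofReal_le_ofReal (htail n)
  calc ∑' α, ENNReal.ofReal (p α * c α) = ∑' α, ENNReal.ofReal (p α) * c α := by
        simp_rw [ENNReal.ofReal_mul (hp _), ENNReal.ofReal_natCast]
    _ = ∑' n, ∑' α, if n < c α then ENNReal.ofReal (p α) else 0 :=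
        ENNReal.tsum_mul_natCast_eq_tsum_tsum_ite _ c
    _ ≤ ∑' n, ENNReal.ofReal (t ^ (n + 1)) := ENNReal.tsum_le_tsum htail'
    _ = ENNReal.ofReal (t / (1 - t)) := by
        rw [← ENNReal.ofReal_tsum_of_nonneg (fun n => by positivity) hgeom.summable,
          hgeom.tsum_eq]

theorem tsum_negMulLog_le_of_tail_le_geometric {p : ℕ → ℝ} (hp : ∀ α, 0 ≤ p α)
    (hps : Summable p) (hp1 : ∑' α, p α = 1) (hN : ∀ n, N n ≠ 0)
    (hc : ∀ n α, n < c α ↔ N n ≤ α) {A L : ℝ} (hL : 0 ≤ L) (ht0 : 0 < t) (ht1 : t < 1)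
    (hNlog : ∀ n, log (N n) ≤ A + L * n)
    (htail : ∀ n, (∑' α, if N n ≤ α then p α else 0) ≤ t ^ (n + 1)) :
    ∑' α, negMulLog (p α) ≤ A - log (1 - t) + (L - log t) * (t / (1 - t)) := by
  set q : ℕ → ℝ := fun α => (1 - t) * t ^ c α / N (c α)
  have hN' : ∀ n, (0 : ℝ) < N n := fun n => by exact_mod_cast Nat.pos_of_ne_zero (hN n)
  have hq : ∀ α, 0 < q α := fun α => div_pos (mul_pos (by linarith) (pow_pos ht0 _)) (hN' _)
  have hblock : ∀ α, α < N (c α) := fun α => not_le.1 fun h => lt_irrefl _ ((hc _ α).2 h)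
  obtain ⟨hqs, hq1⟩ := summable_and_tsum_geometric_div_le_one hN hblock ht0.le ht1
  obtain ⟨hpcs, hpc⟩ := summable_and_tsum_mul_natCast_le_of_tail_le hp hps hc ht0.le ht1 htail
  set C := A - log (1 - t)
  set B := L - log t
  have hB : 0 ≤ B := by linarith [log_neg ht0 ht1]
  have hlogq : ∀ α, -log (q α) ≤ C + B * c α := fun α => by
    have hlog : log (q α) = log (1 - t) + c α * log t - log (N (c α)) := by
      rw [log_div (by positivity) (hN' _).ne', log_mul (by linarith) (by positivity), log_pow]
    linarith [hNlog (c α)]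
  have hbound : Summable fun α => C * p α + B * (p α * c α) :=
    (hps.mul_left C).add (hpcs.mul_left B)
  have hpq_le : ∀ α, p α * -log (q α) ≤ C * p α + B * (p α * c α) := fun α =>
    (mul_le_mul_of_nonneg_left (hlogq α) (hp α)).trans_eq (by ring)
  have hpq : Summable fun α => p α * -log (q α) := by
    refine hbound.of_nonneg_of_le (fun α => ?_) hpq_le
    exact mul_nonneg (hp α) (neg_nonneg.2 (log_nonpos (hq α).le
      ((hqs.le_tsum α fun j _ => (hq j).le).trans hq1)))
  calc ∑' α, negMulLog (p α) ≤ ∑' α, p α * -log (q α) :=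
        tsum_negMulLog_le_tsum_mul_neg_log hp hps hp1 hq hqs hq1 hpq
    _ ≤ ∑' α, (C * p α + B * (p α * c α)) := hpq.tsum_le_tsum hpq_le hbound
    _ = C + B * ∑' α, p α * c α := by
        rw [(hps.mul_left C).tsum_add (hpcs.mul_left B), tsum_mul_left, tsum_mul_left, hp1,
          mul_one]
    _ ≤ C + B * (t / (1 - t)) := by gcongr

theorem tsum_negMulLog_le_of_tail_le_exp {p : ℕ → ℝ} (hp : ∀ α, 0 ≤ p α)
    (hps : Summable p) (hp1 : ∑' α, p α = 1) (hN : ∀ n, N n ≠ 0)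
    (hc : ∀ n α, n < c α ↔ N n ≤ α) {A L x : ℝ} (hL : 0 ≤ L) (hx : 0 < x)
    (hNlog : ∀ n, log (N n) ≤ A + L * n)
    (htail : ∀ n, (∑' α, if N n ≤ α then p α else 0) ≤ exp (-x * (n + 1))) :
    ∑' α, negMulLog (p α) ≤ A + log (x⁻¹ + 1) + L / x + 1 := by
  set t := exp (-x)
  have ht0 : 0 < t := exp_pos _
  have ht1 : t < 1 := exp_lt_one_iff.2 (neg_lt_zero.2 hx)
  have h := tsum_negMulLog_le_of_tail_le_geometric hp hps hp1 hN hc hL ht0 ht1 hNlog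
    fun n => by
      rw [← exp_nat_mul]
      convert htail n using 2
      push_cast; ring
  have hinv : (1 - t)⁻¹ ≤ x⁻¹ + 1 := one_sub_exp_neg_inv_le hx
  have hlog : -log (1 - t) ≤ log (x⁻¹ + 1) := by
    rw [← log_inv]; exact log_le_log (inv_pos.2 (by linarith)) hinv
  have hmean : t / (1 - t) ≤ x⁻¹ := by
    have h1t : 1 - t ≠ 0 := by linarith
    rw [show t / (1 - t) = (1 - t)⁻¹ - 1 by field_simp; ring]; linarith
  calc ∑' α, negMulLog (p α) ≤ A - log (1 - t) + (L + x) * (t / (1 - t)) := by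
        rwa [log_exp, sub_neg_eq_add] at h
    _ ≤ A + log (x⁻¹ + 1) + (L + x) * x⁻¹ := by gcongr; linarith
    _ = A + log (x⁻¹ + 1) + L / x + 1 := by field_simp; ring

end Blocks

theorem stmt_8 (p : ℕ → ℝ) (hpos : ∀ α, 0 ≤ p α) (hsum : Summable p)
    (hone : ∑' α, p α = 1)
    (k D m' : ℕ) (hk : 1 ≤ k) (hD : 2 ≤ D) (ξ : ℝ) (hξ : 0 < ξ)
    (htail : ∀ m : ℕ, m' < m →
      (∑' α, if k * D ^ (2 * m) ≤ α then p α else 0) ≤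
        Real.exp (-2 * ((m : ℝ) - m') / ξ)) :
    (∑' α, Real.negMulLog (p α)) ≤
      Real.log k + (2 * (m' : ℝ) + 2) * Real.log D + ξ * Real.log D +
        4 * Real.log D + 1 + Real.log ((D : ℝ) ^ 2 - 1) + Real.log (ξ / 2 + 1) := by
  have hD' : (2 : ℝ) ≤ D := by exact_mod_cast hD
  have hlogD : 0 ≤ log D := log_nonneg (by linarith)
  have key := tsum_negMulLog_le_of_tail_le_exp hpos hsum hone
    (N := fun n => k * (D ^ 2) ^ (m' + n + 1)) (c := fun α => Nat.log (D ^ 2) (α / k) - m')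
    (fun n => by positivity) (fun n α => Nat.lt_log_div_sub_iff hk (by nlinarith) n)
    (A := log k + (2 * m' + 2) * log D) (L := 2 * log D) (by positivity)
    (by positivity : 0 < 2 / ξ)
    (fun n => by
      push_cast
      rw [log_mul (by positivity) (by positivity), ← pow_mul, log_pow]
      push_cast; linarith)
    (fun n => by
      rw [← pow_mul]
      convert htail (m' + n + 1) (by omega) using 2
      push_cast; ring)
  rw [inv_div, show 2 * log D / (2 / ξ) = ξ * log D by field_simp] at key
  linarith [log_nonneg (by nlinarith : (1 : ℝ) ≤ D ^ 2 - 1)]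
end

section
/- Let ρ be a positive semidefinite operator on H_A ⊗ H_B that is a convex mixture of pure states each of Schmidt rank at most k, normalized with tr ρ = 1, and let ψ₀ be a unit vector with ⟨ψ₀, ρ ψ₀⟩ ≥ 1 − δ. Then the squared Schmidt coefficients |A_α|² of ψ₀ (ordered non-increasingly) satisfy ∑_{α > k} |A_α|² ≤ δ. -/
/-!
Write `φ = ∑_{β<k} B_β x_β ⊗ y_β` and let `Q` be the orthogonal projection onto
`W = span {x_β}`, so `dim W ≤ k`. Since `Q ⊗ 1` fixes `φ`, `⟨φ, ψ₀⟩ = ⟨φ, (Q ⊗ 1) ψ₀⟩`, and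
Cauchy–Schwarz gives `|⟨φ, ψ₀⟩|² ≤ ‖φ‖² ∑_α t_α |A_α|²` with `t_α = ‖Q u_α‖² ∈ [0, 1]` and
`∑_α t_α ≤ dim W ≤ k` (Bessel). For non-increasing `|A_α|²` such weights can do no better than
`∑_{α<k} |A_α|²`. Averaging over the ensemble, using `tr ρ = ∑_γ P γ ‖φ_γ‖² = 1`, gives
`1 - δ ≤ ∑_{α<k} |A_α|²`, and `∑_α |A_α|² = ‖ψ₀‖² = 1`.
-/

open Matrix

def tensV {m n : Type*} (u : m → ℂ) (v : n → ℂ) : m × n → ℂ :=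
  fun p => u p.1 * v p.2

open Finset
open scoped InnerProductSpace ComplexConjugate

theorem sum_mul_le_sum_filter_lt_of_antitone {r k : ℕ} {a t : Fin r → ℝ} (ha : Antitone a)
    (ha0 : ∀ α, 0 ≤ a α) (ht0 : ∀ α, 0 ≤ t α) (ht1 : ∀ α, t α ≤ 1) (hsum : ∑ α, t α ≤ k) :
    ∑ α, t α * a α ≤ ∑ α ∈ univ.filter (fun α : Fin r => (α : ℕ) < k), a α := by
  by_cases hkr : k < r
  · set c := a ⟨k, hkr⟩
    -- `c = a_k` is a threshold: `(t α - [α < k]) * (a α - c) ≤ 0` for every `α`.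
    have hpoint : ∀ α : Fin r, t α * a α - (if (α : ℕ) < k then a α else 0)
        ≤ c * (t α - if (α : ℕ) < k then 1 else 0) := by
      intro α
      split_ifs with hα
      · have : c ≤ a α := ha (Fin.le_def.2 hα.le)
        nlinarith [mul_nonneg (sub_nonneg.2 (ht1 α)) (sub_nonneg.2 this)]
      · have : a α ≤ c := ha (Fin.le_def.2 (not_lt.1 hα))
        nlinarith [mul_nonneg (ht0 α) (sub_nonneg.2 this)]
    have hcard : #{α : Fin r | (α : ℕ) < k} = k := by
      rw [Fin.card_filter_val_lt]; omega
    have hgap : ∑ α, t α * a α - ∑ α ∈ univ.filter (fun α : Fin r => (α : ℕ) < k), a α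
        ≤ c * (∑ α, t α - k) := calc
      _ = ∑ α, (t α * a α - if (α : ℕ) < k then a α else 0) := by
        rw [sum_filter, sum_sub_distrib]
      _ ≤ ∑ α, c * (t α - if (α : ℕ) < k then 1 else 0) := sum_le_sum fun α _ => hpoint α
      _ = c * (∑ α, t α - k) := by
        rw [← mul_sum, sum_sub_distrib, sum_boole, hcard]
    linarith [mul_nonpos_of_nonneg_of_nonpos (ha0 ⟨k, hkr⟩) (sub_nonpos.2 hsum)]
  · rw [filter_true_of_mem fun α _ => by omega]
    exact sum_le_sum fun α _ => mul_le_of_le_one_left (ha0 α) (ht1 α)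

theorem Orthonormal.sum_norm_sq_starProjection_le_finrank {𝕜 E ι : Type*} [RCLike 𝕜]
    [NormedAddCommGroup E] [InnerProductSpace 𝕜 E] [Fintype ι] {u : ι → E}
    (hu : Orthonormal 𝕜 u) (W : Submodule 𝕜 E) [FiniteDimensional 𝕜 W] :
    ∑ α, ‖W.starProjection (u α)‖ ^ 2 ≤ Module.finrank 𝕜 W := by
  set b := stdOrthonormalBasis 𝕜 W
  calc ∑ α, ‖W.starProjection (u α)‖ ^ 2 = ∑ j, ∑ α, ‖⟪u α, (b j : E)⟫_𝕜‖ ^ 2 := by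
        rw [sum_comm]
        refine sum_congr rfl fun α _ => ?_
        rw [Submodule.starProjection_apply, Submodule.norm_coe, ← b.sum_sq_norm_inner_right]
        simp_rw [Submodule.inner_orthogonalProjectionOnto_eq_of_mem_left, norm_inner_symm]
    _ ≤ ∑ j, ‖(b j : E)‖ ^ 2 := sum_le_sum fun j _ => hu.sum_inner_products_le _
    _ = Module.finrank 𝕜 W := by
      simp [Submodule.norm_coe, b.orthonormal.1]

section Tensor

variable {m n : Type*}

def tensE (a : EuclideanSpace ℂ m) (b : EuclideanSpace ℂ n) : EuclideanSpace ℂ (m × n) :=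
  WithLp.toLp 2 (tensV a b)

theorem toLp_sum_smul_tensV {ι : Type*} [Fintype ι] (c : ι → ℂ) (x : ι → m → ℂ)
    (y : ι → n → ℂ) :
    WithLp.toLp 2 (∑ β, c β • tensV (x β) (y β))
      = ∑ β, c β • tensE (WithLp.toLp 2 (x β)) (WithLp.toLp 2 (y β)) := by
  simp [tensE]

variable [Fintype m] [Fintype n]

theorem inner_tensE (a u : EuclideanSpace ℂ m) (b v : EuclideanSpace ℂ n) :
    ⟪tensE a b, tensE u v⟫_ℂ = ⟪a, u⟫_ℂ * ⟪b, v⟫_ℂ := by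
  simp only [tensE, EuclideanSpace.inner_eq_star_dotProduct,
    dotProduct, tensV, Fintype.sum_prod_type, Pi.star_apply, star_mul', sum_mul_sum]
  exact sum_congr rfl fun i _ => sum_congr rfl fun j _ => by ring

theorem inner_tensE_starProjection (W : Submodule ℂ (EuclideanSpace ℂ m))
    [W.HasOrthogonalProjection] {x : EuclideanSpace ℂ m} (hx : x ∈ W)
    (y : EuclideanSpace ℂ n) (u : EuclideanSpace ℂ m) (v : EuclideanSpace ℂ n) :
    ⟪tensE x y, tensE (W.starProjection u) v⟫_ℂ = ⟪tensE x y, tensE u v⟫_ℂ := by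
  rw [inner_tensE, inner_tensE, ← W.inner_starProjection_left_eq_right,
    W.starProjection_eq_self_iff.2 hx]

variable {ι : Type*} [Fintype ι] {v : ι → EuclideanSpace ℂ n}

theorem inner_sum_tensE_of_orthonormal (hv : Orthonormal ℂ v) (A C : ι → ℂ)
    (w z : ι → EuclideanSpace ℂ m) :
    ⟪∑ α, A α • tensE (w α) (v α), ∑ α, C α • tensE (z α) (v α)⟫_ℂ
      = ∑ α, conj (A α) * C α * ⟪w α, z α⟫_ℂ := by
  classical
  simp only [sum_inner, inner_sum, inner_smul_left, inner_smul_right, inner_tensE,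
    orthonormal_iff_ite.mp hv, mul_ite, mul_one, mul_zero, sum_ite_eq', mem_univ, if_true]
  exact sum_congr rfl fun α _ => by ring

theorem norm_sq_sum_tensE_of_orthonormal (hv : Orthonormal ℂ v) (A : ι → ℂ)
    (w : ι → EuclideanSpace ℂ m) :
    ‖∑ α, A α • tensE (w α) (v α)‖ ^ 2 = ∑ α, ‖A α‖ ^ 2 * ‖w α‖ ^ 2 := by
  have h := inner_sum_tensE_of_orthonormal hv A A w w
  simp only [inner_self_eq_norm_sq_to_K, RCLike.conj_mul] at h
  exact_mod_cast h

end Tensor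

theorem norm_inner_sq_le_of_schmidtRank_le {m n : Type*} [Fintype m] [Fintype n] {r k : ℕ}
    (A : Fin r → ℂ) {u : Fin r → EuclideanSpace ℂ m} {v : Fin r → EuclideanSpace ℂ n}
    (hu : Orthonormal ℂ u) (hv : Orthonormal ℂ v) (hA : Antitone fun α => ‖A α‖)
    (B : Fin k → ℂ) (x : Fin k → EuclideanSpace ℂ m) (y : Fin k → EuclideanSpace ℂ n) :
    ‖⟪∑ β, B β • tensE (x β) (y β), ∑ α, A α • tensE (u α) (v α)⟫_ℂ‖ ^ 2
      ≤ ‖∑ β, B β • tensE (x β) (y β)‖ ^ 2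
        * ∑ α ∈ univ.filter (fun α : Fin r => (α : ℕ) < k), ‖A α‖ ^ 2 := by
  set φ := ∑ β, B β • tensE (x β) (y β)
  set W := Submodule.span ℂ (Set.range x)
  set χ := ∑ α, A α • tensE (W.starProjection (u α)) (v α)
  have hproj : ⟪φ, ∑ α, A α • tensE (u α) (v α)⟫_ℂ = ⟪φ, χ⟫_ℂ := by
    simp only [φ, χ, sum_inner, inner_sum, inner_smul_left, inner_smul_right,
      inner_tensE_starProjection W (Submodule.subset_span (Set.mem_range_self _))]
  have hrank : ∑ α, ‖W.starProjection (u α)‖ ^ 2 ≤ k :=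
    (hu.sum_norm_sq_starProjection_le_finrank W).trans <| by
      exact_mod_cast (finrank_range_le_card x).trans_eq (Fintype.card_fin k)
  calc ‖⟪φ, ∑ α, A α • tensE (u α) (v α)⟫_ℂ‖ ^ 2 = ‖⟪φ, χ⟫_ℂ‖ ^ 2 := by rw [hproj]
    _ ≤ (‖φ‖ * ‖χ‖) ^ 2 := by gcongr; exact norm_inner_le_norm φ χ
    _ = ‖φ‖ ^ 2 * ∑ α, ‖W.starProjection (u α)‖ ^ 2 * ‖A α‖ ^ 2 := by
      simp only [mul_pow, χ, norm_sq_sum_tensE_of_orthonormal hv, mul_comm]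
    _ ≤ ‖φ‖ ^ 2 * ∑ α ∈ univ.filter (fun α : Fin r => (α : ℕ) < k), ‖A α‖ ^ 2 := by
      gcongr
      refine sum_mul_le_sum_filter_lt_of_antitone
        (fun α β h => pow_le_pow_left₀ (norm_nonneg _) (hA h) 2) (fun α => by positivity)
        (fun α => by positivity) (fun α => ?_) hrank
      simpa using (W.norm_starProjection_apply_le (u α)).trans_eq (hu.1 α)

section Ensemble

variable {κ : Type*} [Fintype κ]

theorem ofReal_norm_toLp_sq (a : κ → ℂ) : ((‖WithLp.toLp 2 a‖ ^ 2 : ℝ) : ℂ) = star a ⬝ᵥ a := by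
  push_cast
  exact (inner_self_eq_norm_sq_to_K (WithLp.toLp 2 a)).symm.trans (dotProduct_comm _ _)

theorem orthonormal_toLp_of_dotProduct {ι : Type*} [DecidableEq ι] {u : ι → κ → ℂ}
    (hu : ∀ α β, star (u α) ⬝ᵥ u β = if α = β then 1 else 0) :
    Orthonormal ℂ fun α => WithLp.toLp 2 (u α) :=
  orthonormal_iff_ite.2 fun α β => (dotProduct_comm _ _).trans (hu α β)

variable {ι : Type*} [Fintype ι]

def mixedState (P : ι → ℝ) (w : ι → κ → ℂ) : Matrix κ κ ℂ :=
  ∑ γ, (P γ : ℂ) • vecMulVec (w γ) (star (w γ))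

theorem trace_mixedState (P : ι → ℝ) (w : ι → κ → ℂ) :
    (mixedState P w).trace = ((∑ γ, P γ * ‖WithLp.toLp 2 (w γ)‖ ^ 2 : ℝ) : ℂ) := by
  simp only [mixedState, trace_sum, trace_smul, trace_vecMulVec]
  push_cast
  refine sum_congr rfl fun γ _ => ?_
  rw [smul_eq_mul, dotProduct_comm, ← ofReal_norm_toLp_sq]
  push_cast
  rfl

theorem star_dotProduct_mixedState_mulVec (P : ι → ℝ) (w : ι → κ → ℂ) (a : κ → ℂ) :
    star a ⬝ᵥ mixedState P w *ᵥ a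
      = ((∑ γ, P γ * ‖⟪WithLp.toLp 2 (w γ), WithLp.toLp 2 a⟫_ℂ‖ ^ 2 : ℝ) : ℂ) := by
  simp only [mixedState, sum_mulVec, smul_mulVec, vecMulVec_mulVec, dotProduct_sum,
    dotProduct_smul]
  push_cast
  refine sum_congr rfl fun γ _ => ?_
  have hz : star (w γ) ⬝ᵥ a = ⟪WithLp.toLp 2 (w γ), WithLp.toLp 2 a⟫_ℂ := dotProduct_comm _ _
  rw [op_smul_eq_mul, star_dotProduct, hz, smul_eq_mul, RCLike.star_def, RCLike.conj_mul]
  rfl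

end Ensemble

theorem stmt_13 {m n : Type*} [Fintype m] [Fintype n] (G k r : ℕ)
    (P : Fin G → ℝ) (hP : ∀ γ, 0 ≤ P γ)
    (φ : Fin G → (m × n → ℂ))
    (hrank : ∀ γ, ∃ (B : Fin k → ℂ) (x : Fin k → m → ℂ) (y : Fin k → n → ℂ),
      φ γ = ∑ β, B β • tensV (x β) (y β))
    (ρ : Matrix (m × n) (m × n) ℂ)
    (hρ : ρ = ∑ γ, (P γ : ℂ) • Matrix.vecMulVec (φ γ) (star (φ γ)))
    (htr : ρ.trace = 1)
    (A : Fin r → ℂ) (u : Fin r → m → ℂ) (v : Fin r → n → ℂ)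
    (hu : ∀ α β, star (u α) ⬝ᵥ u β = if α = β then 1 else 0)
    (hv : ∀ α β, star (v α) ⬝ᵥ v β = if α = β then 1 else 0)
    (hord : ∀ α β : Fin r, α ≤ β → ‖A β‖ ≤ ‖A α‖)
    (ψ₀ : m × n → ℂ) (hψ₀ : ψ₀ = ∑ α, A α • tensV (u α) (v α))
    (hnorm : star ψ₀ ⬝ᵥ ψ₀ = 1)
    (δ : ℝ) (hexp : 1 - δ ≤ (star ψ₀ ⬝ᵥ ρ.mulVec ψ₀).re) :
    ∑ α ∈ Finset.univ.filter (fun α : Fin r => k ≤ (α : ℕ)), ‖A α‖ ^ 2 ≤ δ := by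
  replace hρ : ρ = mixedState P φ := hρ
  have huE := orthonormal_toLp_of_dotProduct hu
  have hvE := orthonormal_toLp_of_dotProduct hv
  set S := ∑ α ∈ univ.filter (fun α : Fin r => (α : ℕ) < k), ‖A α‖ ^ 2
  have hψ : WithLp.toLp 2 ψ₀
      = ∑ α, A α • tensE (WithLp.toLp 2 (u α)) (WithLp.toLp 2 (v α)) := by
    rw [hψ₀, toLp_sum_smul_tensV]
  have hA : ∑ α, ‖A α‖ ^ 2 = 1 := by
    have h := norm_sq_sum_tensE_of_orthonormal hvE A fun α => WithLp.toLp 2 (u α)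
    simp only [← hψ, huE.1, one_pow, mul_one] at h
    rw [← h]
    exact_mod_cast (ofReal_norm_toLp_sq ψ₀).trans hnorm
  have htrace : ∑ γ, P γ * ‖WithLp.toLp 2 (φ γ)‖ ^ 2 = 1 := by
    exact_mod_cast (trace_mixedState P φ).symm.trans (hρ ▸ htr)
  rw [hρ, star_dotProduct_mixedState_mulVec, Complex.ofReal_re] at hexp
  have hfidelity : ∀ γ, ‖⟪WithLp.toLp 2 (φ γ), WithLp.toLp 2 ψ₀⟫_ℂ‖ ^ 2
      ≤ ‖WithLp.toLp 2 (φ γ)‖ ^ 2 * S := by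
    intro γ
    obtain ⟨B, x, y, hφ⟩ := hrank γ
    rw [hφ, hψ, toLp_sum_smul_tensV]
    exact norm_inner_sq_le_of_schmidtRank_le A huE hvE hord B _ _
  have hS : 1 - δ ≤ S := calc
    1 - δ ≤ ∑ γ, P γ * ‖⟪WithLp.toLp 2 (φ γ), WithLp.toLp 2 ψ₀⟫_ℂ‖ ^ 2 := hexp
    _ ≤ ∑ γ, P γ * (‖WithLp.toLp 2 (φ γ)‖ ^ 2 * S) := by
      gcongr with γ
      exacts [hP γ, hfidelity γ]
    _ = S := by simp only [← mul_assoc, ← sum_mul, htrace, one_mul]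
  have hsplit := sum_filter_add_sum_filter_not univ (fun α : Fin r => (α : ℕ) < k) (‖A ·‖ ^ 2)
  simp only [not_lt] at hsplit
  linarith
end
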